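/- arXiv:2506.04188 — 4 statements merged into one kernel-verified Lean document; each statement's English description precedes it below -/
import Mathlib

section
/- Let 0 < α < 1, L > 0, M > 0 and ε > 0. Let φ be a continuous nonnegative function on [0,∞) satisfying φ(t) ≤ (L/Γ(α)) ∫_0^t (t−s)^{α−1} φ(s) ds + ε M (1 + t^α) for all t ≥ 0, and let u be a continuous nonnegative function on [0,∞) with u(t) = (L/Γ(α)) ∫_0^t (t−s)^{α−1} u(s) ds + M (1 + t^α) for all t ≥ 0. Then φ(t) ≤ ε u(t) for all t ≥ 0. -/
/-!
Perturb the comparison function to `v = (1 + δ) ε u`, which satisfies the Volterra equation with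
the strictly larger inhomogeneity `(1 + δ) ε M (1 + t^α)`. At the first time where `φ` would reach
`v`, the nonnegative kernel gives `∫ k φ ≤ ∫ k v`, and the strict gap in the inhomogeneities then
forces `φ < v` there, a contradiction. Hence `φ < (1 + δ) ε u` everywhere; let `δ → 0`.
-/

open MeasureTheory Real Set Filter Topology

theorem intervalIntegrable_sub_rpow_mul {r : ℝ} (hr : -1 < r) {a b t : ℝ} {f : ℝ → ℝ}
    (hf : ContinuousOn f (uIcc a b)) :
    IntervalIntegrable (fun s => (t - s) ^ r * f s) volume a b := by
  have hker : IntervalIntegrable (fun s : ℝ => (t - s) ^ r) volume a b := by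
    simpa using
      (intervalIntegral.intervalIntegrable_rpow' (a := t - a) (b := t - b) hr).comp_sub_left t
  exact hker.mul_continuousOn hf

theorem lt_of_sub_volterra_integral_lt {K : ℝ → ℝ → ℝ} {f g : ℝ → ℝ}
    (hK : ∀ t, ∀ s ∈ Ioo 0 t, 0 ≤ K t s)
    (hf : ContinuousOn f (Ici 0)) (hg : ContinuousOn g (Ici 0))
    (hKf : ∀ t ≥ (0 : ℝ), IntervalIntegrable (fun s => K t s * f s) volume 0 t)
    (hKg : ∀ t ≥ (0 : ℝ), IntervalIntegrable (fun s => K t s * g s) volume 0 t)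
    (hfg : ∀ t ≥ (0 : ℝ),
      f t - ∫ s in (0 : ℝ)..t, K t s * f s < g t - ∫ s in (0 : ℝ)..t, K t s * g s) :
    ∀ t ≥ (0 : ℝ), f t < g t := by
  by_contra! ⟨T, hT, hgfT⟩
  set S := {t ∈ Ici (0 : ℝ) | g t ≤ f t}
  have hS : IsClosed S := isClosed_Ici.isClosed_le hg hf
  have hSbdd : BddBelow S := ⟨0, fun _ hx => hx.1⟩
  obtain ⟨ht₀, hgf⟩ : sInf S ∈ S := hS.csInf_mem ⟨T, hT, hgfT⟩ hSbdd
  set t₀ := sInf S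
  have hbefore : ∀ s ∈ Ioo 0 t₀, f s < g s := fun s hs =>
    lt_of_not_ge fun h => (csInf_le hSbdd ⟨hs.1.le, h⟩).not_gt hs.2
  have hint : ∫ s in (0 : ℝ)..t₀, K t₀ s * f s ≤ ∫ s in (0 : ℝ)..t₀, K t₀ s * g s :=
    intervalIntegral.integral_mono_on_of_le_Ioo ht₀ (hKf t₀ ht₀) (hKg t₀ ht₀) fun s hs =>
      mul_le_mul_of_nonneg_left (hbefore s hs).le (hK t₀ s hs)
  linarith [hfg t₀ ht₀]

theorem le_of_forall_pos_lt_one_add_mul {x y : ℝ} (h : ∀ δ > 0, x < (1 + δ) * y) : x ≤ y := by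
  have hlim : Tendsto (fun δ : ℝ => (1 + δ) * y) (𝓝[>] 0) (𝓝 y) := by
    have := ((continuous_const_add (1 : ℝ)).mul_const y).tendsto' 0 y (by simp)
    exact this.mono_left nhdsWithin_le_nhds
  exact ge_of_tendsto hlim (eventually_nhdsWithin_of_forall fun δ hδ => (h δ hδ).le)

theorem fractional_gronwall_comparison_general
    (α L M ε : ℝ) (hα0 : 0 < α) (hL : 0 < L) (hM : 0 < M) (hε : 0 < ε)
    (φ : ℝ → ℝ) (hφ_cont : ContinuousOn φ (Set.Ici 0))
    (hφ : ∀ t ≥ (0:ℝ),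
      φ t ≤ (L / Real.Gamma α) * (∫ s in (0:ℝ)..t, (t - s) ^ (α - 1) * φ s)
            + ε * M * (1 + t ^ α))
    (u : ℝ → ℝ) (hu_cont : ContinuousOn u (Set.Ici 0))
    (hu : ∀ t ≥ (0:ℝ),
      u t = (L / Real.Gamma α) * (∫ s in (0:ℝ)..t, (t - s) ^ (α - 1) * u s)
            + M * (1 + t ^ α)) :
    ∀ t ≥ (0:ℝ), φ t ≤ ε * u t := by
  set c := L / Real.Gamma α
  have hc : 0 ≤ c := (div_pos hL (Real.Gamma_pos_of_pos hα0)).le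
  have hK_int : ∀ f : ℝ → ℝ, ∀ t, ∫ s in (0 : ℝ)..t, c * (t - s) ^ (α - 1) * f s =
      c * ∫ s in (0 : ℝ)..t, (t - s) ^ (α - 1) * f s := fun f t => by
    simp_rw [mul_assoc, intervalIntegral.integral_const_mul]
  have hK_intble : ∀ f : ℝ → ℝ, ContinuousOn f (Ici 0) → ∀ t ≥ (0 : ℝ),
      IntervalIntegrable (fun s => c * (t - s) ^ (α - 1) * f s) volume 0 t := fun f hf t ht => by
    simp_rw [mul_assoc]
    exact (intervalIntegrable_sub_rpow_mul (by linarith)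
      (hf.mono (uIcc_of_le ht ▸ Icc_subset_Ici_self))).const_mul c
  intro t ht
  refine le_of_forall_pos_lt_one_add_mul fun δ hδ => ?_
  have hv_cont : ContinuousOn (fun t => (1 + δ) * (ε * u t)) (Ici 0) :=
    continuousOn_const.mul (continuousOn_const.mul hu_cont)
  refine lt_of_sub_volterra_integral_lt
    (fun t s hs => mul_nonneg hc (rpow_nonneg (by linarith [hs.2]) _)) hφ_cont hv_cont
    (hK_intble φ hφ_cont) (hK_intble _ hv_cont) (fun t ht => ?_) t ht
  have hgap : 0 < ε * M * (1 + t ^ α) := by positivity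
  have hv : ∫ s in (0 : ℝ)..t, c * (t - s) ^ (α - 1) * ((1 + δ) * (ε * u s)) =
      (1 + δ) * ε * (c * ∫ s in (0 : ℝ)..t, (t - s) ^ (α - 1) * u s) := by
    rw [← hK_int, ← intervalIntegral.integral_const_mul]
    congr 1 with s
    ring
  rw [hK_int, hv, hu t ht]
  nlinarith [hφ t ht]

/-- **Fractional Gronwall-type comparison.** If a continuous nonnegative `φ` satisfies the
fractional integral inequality with inhomogeneity `ε M (1 + t^α)`, and `u` solves the
corresponding comparison equation with inhomogeneity `M (1 + t^α)`, then `φ t ≤ ε u t`. -/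
theorem fractional_gronwall_comparison
    (α L M ε : ℝ) (hα0 : 0 < α) (hα1 : α < 1) (hL : 0 < L) (hM : 0 < M) (hε : 0 < ε)
    (φ : ℝ → ℝ) (hφ_cont : ContinuousOn φ (Set.Ici 0))
    (hφ_nonneg : ∀ t ≥ (0:ℝ), 0 ≤ φ t)
    (hφ : ∀ t ≥ (0:ℝ),
      φ t ≤ (L / Real.Gamma α) * (∫ s in (0:ℝ)..t, (t - s) ^ (α - 1) * φ s)
            + ε * M * (1 + t ^ α))
    (u : ℝ → ℝ) (hu_cont : ContinuousOn u (Set.Ici 0))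
    (hu_nonneg : ∀ t ≥ (0:ℝ), 0 ≤ u t)
    (hu : ∀ t ≥ (0:ℝ),
      u t = (L / Real.Gamma α) * (∫ s in (0:ℝ)..t, (t - s) ^ (α - 1) * u s)
            + M * (1 + t ^ α)) :
    ∀ t ≥ (0:ℝ), φ t ≤ ε * u t :=
  fractional_gronwall_comparison_general α L M ε hα0 hL hM hε φ hφ_cont hφ u hu_cont hu
end

section
/- Let 0 < α < 1, h > 0, t > 0 and let M be an integer such that t e^{Mh} ≤ 1 − α. Then h (sin(πα)/π) Σ_{i=−∞}^{M−1} e^{(1−α)ih} e^{−e^{ih} t} ≤ (t^{α−1}/Γ(α)) · (1 − Γ(1−α, t e^{Mh})/Γ(1−α)). -/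
open MeasureTheory Real Set

/-- The upper incomplete Gamma function `Γ(s, x) = ∫_x^∞ e^{-σ} σ^{s-1} dσ`. -/
noncomputable def upperGamma (s x : ℝ) : ℝ :=
  ∫ σ in Set.Ioi x, Real.exp (-σ) * σ ^ (s - 1)

/-!
The summand `f u = e^{(1-α)u} e^{-t e^u}` is increasing on `(-∞, Mh]`, since its logarithm has
derivative `1 - α - t e^u ≥ 0` there. Hence each term `h f(ih)` is at most `∫_{ih}^{(i+1)h} f`,
and the tail is at most `∫_{-∞}^{Mh} f`. The substitution `σ = t e^u` turns this integral into
`t^{α-1} γ(1-α, t e^{Mh})`, where `γ(s, x) = Γ(s) - Γ(s, x)` is the lower incomplete Gamma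
function, and the reflection formula `Γ(α) Γ(1-α) = π / sin(πα)` absorbs the factor `sin(πα)/π`.
-/

noncomputable def lowerGamma (s x : ℝ) : ℝ :=
  ∫ σ in Ioc 0 x, exp (-σ) * σ ^ (s - 1)

theorem lowerGamma_add_upperGamma {s x : ℝ} (hs : 0 < s) (hx : 0 ≤ x) :
    lowerGamma s x + upperGamma s x = Gamma s := by
  have hint := GammaIntegral_convergent hs
  rw [Gamma_eq_integral hs, ← Ioc_union_Ioi_eq_Ioi hx, setIntegral_union (Ioc_disjoint_Ioi le_rfl)
    measurableSet_Ioi (hint.mono_set Ioc_subset_Ioi_self) (hint.mono_set (Ioi_subset_Ioi hx))]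
  rfl

section ExpSubstitution

variable {E : Type*} [NormedAddCommGroup E] [NormedSpace ℝ E] {c : ℝ}

theorem image_const_mul_exp_Iic (hc : 0 < c) (a : ℝ) :
    (fun x ↦ c * exp x) '' Iic a = Ioc 0 (c * exp a) := by
  rw [← image_image (c * ·), image_exp_Iic, image_mul_left_Ioc hc, mul_zero]

theorem integral_comp_const_mul_exp_Iic (g : ℝ → E) (hc : 0 < c) (a : ℝ) :
    ∫ x in Iic a, (c * exp x) • g (c * exp x) = ∫ y in Ioc 0 (c * exp a), g y := by
  symm
  rw [← image_const_mul_exp_Iic hc]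
  simpa [abs_of_pos (mul_pos hc (exp_pos _))] using integral_image_eq_integral_abs_deriv_smul
    measurableSet_Iic (fun x _ ↦ ((hasDerivAt_exp x).const_mul c).hasDerivWithinAt)
    (fun x _ y _ hxy ↦ exp_injective (mul_left_cancel₀ hc.ne' hxy)) g

theorem integrableOn_comp_const_mul_exp_Iic (g : ℝ → E) (hc : 0 < c) (a : ℝ) :
    IntegrableOn (fun x ↦ (c * exp x) • g (c * exp x)) (Iic a) ↔
      IntegrableOn g (Ioc 0 (c * exp a)) := by
  symm
  rw [← image_const_mul_exp_Iic hc]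
  simpa [abs_of_pos (mul_pos hc (exp_pos _))] using
    integrableOn_image_iff_integrableOn_abs_deriv_smul
    measurableSet_Iic (fun x _ ↦ ((hasDerivAt_exp x).const_mul c).hasDerivWithinAt)
    (fun x _ y _ hxy ↦ exp_injective (mul_left_cancel₀ hc.ne' hxy)) g

end ExpSubstitution

section KernelIntegral

variable {s t : ℝ}

theorem const_mul_exp_smul_gammaIntegrand (ht : 0 < t) (u : ℝ) :
    (t * exp u) • (exp (-(t * exp u)) * (t * exp u) ^ (s - 1)) =
      t ^ s * (exp (s * u) * exp (-exp u * t)) := by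
  have htu : 0 < t * exp u := mul_pos ht (exp_pos u)
  rw [smul_eq_mul, rpow_sub_one htu.ne', mul_rpow ht.le (exp_pos u).le, ← exp_mul]
  field_simp

theorem integrableOn_exp_mul_mul_exp_neg_exp_mul_Iic (hs : 0 < s) (ht : 0 < t) (b : ℝ) :
    IntegrableOn (fun u ↦ exp (s * u) * exp (-exp u * t)) (Iic b) := by
  have hG : IntegrableOn (fun σ ↦ exp (-σ) * σ ^ (s - 1)) (Ioc 0 (t * exp b)) :=
    (GammaIntegral_convergent hs).mono_set Ioc_subset_Ioi_self
  rw [← integrableOn_comp_const_mul_exp_Iic _ ht] at hG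
  simp_rw [const_mul_exp_smul_gammaIntegrand ht] at hG
  refine IntegrableOn.congr_fun (hG.const_mul (t ^ (-s))) (fun u _ ↦ ?_) measurableSet_Iic
  rw [← mul_assoc, ← rpow_add ht, neg_add_cancel, rpow_zero, one_mul]

theorem lowerGamma_const_mul_exp (ht : 0 < t) (b : ℝ) :
    lowerGamma s (t * exp b) = t ^ s * ∫ u in Iic b, exp (s * u) * exp (-exp u * t) := by
  rw [lowerGamma, ← integral_comp_const_mul_exp_Iic _ ht, ← integral_const_mul]
  simp_rw [const_mul_exp_smul_gammaIntegrand ht]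

theorem monotoneOn_exp_mul_mul_exp_neg_exp_mul (ht : 0 ≤ t) {b : ℝ} (hb : t * exp b ≤ s) :
    MonotoneOn (fun u ↦ exp (s * u) * exp (-exp u * t)) (Iic b) := by
  simp_rw [← exp_add]
  refine exp_monotone.comp_monotoneOn (monotoneOn_of_hasDerivWithinAt_nonneg (convex_Iic b)
    (by fun_prop) (fun u _ ↦ (((hasDerivAt_id u).const_mul s).add
      ((hasDerivAt_exp u).neg.mul_const t)).hasDerivWithinAt) fun u hu ↦ ?_)
  rw [interior_Iic] at hu
  have : t * exp u ≤ t * exp b := mul_le_mul_of_nonneg_left (exp_le_exp.2 hu.le) ht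
  simp only [mul_one]
  linarith

end KernelIntegral

section RiemannSum

variable {g : ℝ → ℝ} {h : ℝ} {M : ℤ}

theorem MonotoneOn.mul_le_setIntegral_Ioc {a b : ℝ} (hab : a ≤ b) (hg : MonotoneOn g (Icc a b))
    (hint : IntegrableOn g (Ioc a b)) : (b - a) * g a ≤ ∫ u in Ioc a b, g u := by
  have := setIntegral_ge_of_const_le measurableSet_Ioc (by simp)
    (fun u hu ↦ hg (left_mem_Icc.2 hab) (Ioc_subset_Icc_self hu) hu.1.le) hint
  rwa [volume_real_Ioc_of_le hab, smul_eq_mul] at this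

theorem iUnion_Ioc_intCast_mul_of_lt (hh : 0 < h) (M : ℤ) :
    ⋃ i : {i : ℤ // i < M}, Ioc ((i : ℝ) * h) ((i + 1) * h) = Iic (M * h) := by
  ext y
  simp only [mem_iUnion, Subtype.exists, mem_Iic, exists_prop]
  constructor
  · rintro ⟨i, hi, hy⟩
    have : (i : ℝ) + 1 ≤ M := by exact_mod_cast Int.add_one_le_of_lt hi
    exact hy.2.trans (mul_le_mul_of_nonneg_right this hh.le)
  · intro hy
    obtain ⟨i, hi⟩ := mem_iUnion.1 ((iUnion_Ioc_zsmul hh).symm ▸ mem_univ y)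
    simp only [zsmul_eq_mul, Int.cast_add, Int.cast_one] at hi
    exact ⟨i, by exact_mod_cast (lt_of_mul_lt_mul_right (hi.1.trans_le hy) hh.le), hi⟩

theorem pairwise_disjoint_Ioc_intCast_mul_of_lt (h : ℝ) (M : ℤ) :
    Pairwise (Function.onFun Disjoint
      fun i : {i : ℤ // i < M} ↦ Ioc ((i : ℝ) * h) ((i + 1) * h)) := by
  simpa only [Function.onFun, zsmul_eq_mul, Int.cast_add, Int.cast_one] using
    (pairwise_disjoint_Ioc_zsmul h).comp_of_injective (Subtype.val_injective (p := (· < M)))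

theorem MonotoneOn.mul_tsum_le_integral_Iic (hh : 0 < h) (hg : MonotoneOn g (Iic (M * h)))
    (hint : IntegrableOn g (Iic (M * h))) (hg₀ : ∀ u ≤ M * h, 0 ≤ g u) :
    h * ∑' i : {i : ℤ // i < M}, g (i * h) ≤ ∫ u in Iic (M * h), g u := by
  have hsum : HasSum (fun i : {i : ℤ // i < M} ↦ ∫ u in Ioc ((i : ℝ) * h) ((i + 1) * h), g u)
      (∫ u in Iic (M * h), g u) := by
    rw [← iUnion_Ioc_intCast_mul_of_lt hh M] at hint ⊢
    exact hasSum_integral_iUnion (fun _ ↦ measurableSet_Ioc)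
      (pairwise_disjoint_Ioc_intCast_mul_of_lt h M) hint
  have hIcc (i : {i : ℤ // i < M}) : Icc ((i : ℝ) * h) ((i + 1) * h) ⊆ Iic (M * h) :=
    Icc_subset_Iic_self.trans <| Iic_subset_Iic.2 <|
      mul_le_mul_of_nonneg_right (by exact_mod_cast Int.add_one_le_of_lt i.2) hh.le
  have hcell (i : {i : ℤ // i < M}) :
      h * g (i * h) ≤ ∫ u in Ioc ((i : ℝ) * h) ((i + 1) * h), g u :=
    calc h * g (i * h) = ((i + 1) * h - i * h) * g (i * h) := by ring
      _ ≤ _ := (hg.mono (hIcc i)).mul_le_setIntegral_Ioc (by linarith)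
        (hint.mono_set (Ioc_subset_Icc_self.trans (hIcc i)))
  have hnonneg (i : {i : ℤ // i < M}) : 0 ≤ h * g (i * h) :=
    mul_nonneg hh.le (hg₀ _ (hIcc i (left_mem_Icc.2 (by linarith))))
  calc h * ∑' i : {i : ℤ // i < M}, g (i * h) = ∑' i : {i : ℤ // i < M}, h * g (i * h) :=
        tsum_mul_left.symm
    _ ≤ _ := (Summable.of_nonneg_of_le hnonneg hcell hsum.summable).tsum_le_tsum hcell
        hsum.summable
    _ = _ := hsum.tsum_eq

end RiemannSum

/-- **Lower truncation error of the trapezoidal series.** If `t e^{Mh} ≤ 1 - α`, the lower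
tail (indices `i < M`) of the trapezoidal approximation of the fractional kernel is bounded
by `(t^(α-1)/Γ(α)) (1 - Γ(1-α, t e^{Mh})/Γ(1-α))`. -/
theorem lower_truncation_error
    (α h t : ℝ) (M : ℤ) (hα0 : 0 < α) (hα1 : α < 1) (hh : 0 < h) (ht : 0 < t)
    (hM : t * Real.exp ((M : ℝ) * h) ≤ 1 - α) :
    h * (Real.sin (Real.pi * α) / Real.pi) *
        ∑' i : {i : ℤ // i < M},
          Real.exp ((1 - α) * (((i : ℤ) : ℝ) * h)) * Real.exp (-Real.exp (((i : ℤ) : ℝ) * h) * t)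
      ≤ (t ^ (α - 1) / Real.Gamma α) *
          (1 - upperGamma (1 - α) (t * Real.exp ((M : ℝ) * h)) / Real.Gamma (1 - α)) := by
  have hs : 0 < 1 - α := by linarith
  set g := fun u ↦ exp ((1 - α) * u) * exp (-exp u * t)
  set I := ∫ u in Iic (M * h), g u
  have hsum : h * ∑' i : {i : ℤ // i < M}, g (i * h) ≤ I :=
    MonotoneOn.mul_tsum_le_integral_Iic hh (monotoneOn_exp_mul_mul_exp_neg_exp_mul ht.le hM)
      (integrableOn_exp_mul_mul_exp_neg_exp_mul_Iic hs ht _) fun u _ ↦ by positivity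
  have hΓ : 0 < Gamma (1 - α) := Gamma_pos_of_pos hs
  have hlower : 1 - upperGamma (1 - α) (t * exp (M * h)) / Gamma (1 - α) =
      t ^ (1 - α) * I / Gamma (1 - α) := by
    have hsplit := lowerGamma_add_upperGamma hs (mul_pos ht (exp_pos (M * h))).le
    rw [lowerGamma_const_mul_exp ht] at hsplit
    rw [eq_div_iff hΓ.ne', sub_mul, div_mul_cancel₀ _ hΓ.ne']
    linarith
  have hsin : sin (π * α) / π = (Gamma α * Gamma (1 - α))⁻¹ := by
    rw [Gamma_mul_Gamma_one_sub, inv_div]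
  have hrpow : t ^ (α - 1) * t ^ (1 - α) = 1 := by
    rw [← rpow_add ht]; norm_num
  have hΓα : 0 < Gamma α := Gamma_pos_of_pos hα0
  rw [hlower, hsin]
  calc _ = (Gamma α * Gamma (1 - α))⁻¹ * (h * ∑' i : {i : ℤ // i < M}, g (i * h)) := by ring
    _ ≤ (Gamma α * Gamma (1 - α))⁻¹ * I := by gcongr
    _ = t ^ (α - 1) * t ^ (1 - α) * ((Gamma α * Gamma (1 - α))⁻¹ * I) := by rw [hrpow, one_mul]
    _ = _ := by ring
end

section
/- Let 0 < α < 1, h > 0, t > 0 and let N be an integer such that t e^{(N−1)h} ≥ 1 − α. Then h (sin(πα)/π) Σ_{i=N}^{∞} e^{(1−α)ih} e^{−e^{ih} t} ≤ (t^{α−1}/Γ(α)) · Γ(1−α, t e^{(N−1)h})/Γ(1−α). -/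
/-!
For `t e^a ≥ 1 - α` the integrand `u ↦ e^{(1-α)u} e^{-t e^u}` is decreasing on `[a, ∞)`, where
`a = (N-1)h`, so `h` times the tail sum is at most its integral over `(a, ∞)`. The substitution
`σ = t e^u` turns that integral into `t^{α-1} Γ(1-α, t e^a)`, and the reflection formula
`Γ(α) Γ(1-α) = π / sin(πα)` accounts for the prefactor `sin(πα)/π`.
-/

open MeasureTheory Real Set

noncomputable def kernelIntegrand (s x u : ℝ) : ℝ := exp (s * u) * exp (-exp u * x)

lemma kernelIntegrand_add (s x a u : ℝ) :
    kernelIntegrand s x (a + u) = exp (s * a) * kernelIntegrand s (x * exp a) u := by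
  simp only [kernelIntegrand, exp_add, mul_add]
  ring_nf

lemma kernelIntegrand_nonneg (s x u : ℝ) : 0 ≤ kernelIntegrand s x u := by
  unfold kernelIntegrand; positivity

lemma antitoneOn_kernelIntegrand {s x : ℝ} (hsx : s ≤ x) (hx : 0 ≤ x) :
    AntitoneOn (kernelIntegrand s x) (Ici 0) := by
  intro u hu v _ huv
  have hexp : exp u * (v - u + 1) ≤ exp v := by
    calc exp u * (v - u + 1) ≤ exp u * exp (v - u) := by gcongr; exact add_one_le_exp _
      _ = exp v := by rw [← exp_add]; ring_nf
  have hexp_u : 1 ≤ exp u := one_le_exp hu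
  simp only [kernelIntegrand, ← exp_add]
  refine exp_le_exp.2 ?_
  -- `x (e^v - e^u) ≥ x e^u (v - u) ≥ x (v - u) ≥ s (v - u)`
  nlinarith [mul_le_mul_of_nonneg_left hexp hx,
    mul_le_mul_of_nonneg_right hexp_u (sub_nonneg.2 huv),
    mul_le_mul_of_nonneg_right hsx (sub_nonneg.2 huv)]

lemma exp_smul_gammaIntegrand_mul_exp (s x u : ℝ) (hx : 0 < x) :
    exp u • (exp (-(x * exp u)) * (x * exp u) ^ (s - 1)) =
      x ^ (s - 1) * kernelIntegrand s x u := by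
  rw [smul_eq_mul, mul_rpow hx.le (exp_pos u).le, ← exp_mul]
  calc _ = x ^ (s - 1) * exp (u + -(x * exp u) + u * (s - 1)) := by rw [exp_add, exp_add]; ring
    _ = _ := by rw [kernelIntegrand, ← exp_add]; ring_nf

lemma upperGamma_eq_rpow_mul_integral_kernelIntegrand (s : ℝ) {x : ℝ} (hx : 0 < x) :
    upperGamma s x = x ^ s * ∫ u in Ioi 0, kernelIntegrand s x u := by
  have hsub := integral_comp_exp_Ioi (fun y ↦ exp (-(x * y)) * (x * y) ^ (s - 1)) 0
  have hscale := integral_comp_mul_left_Ioi' (fun σ ↦ exp (-σ) * σ ^ (s - 1)) 1 hx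
  simp only [exp_zero, mul_one, exp_smul_gammaIntegrand_mul_exp s x _ hx, integral_const_mul]
    at hsub hscale
  rw [upperGamma, ← hscale, ← hsub, smul_eq_mul, ← mul_assoc, mul_comm x, ← rpow_add_one hx.ne',
    sub_add_cancel]

lemma integrableOn_kernelIntegrand {s x : ℝ} (hs : 0 < s) (hx : 0 < x) :
    IntegrableOn (kernelIntegrand s x) (Ioi 0) := by
  have hΓ : IntegrableOn (fun σ ↦ exp (-σ) * σ ^ (s - 1)) (Ioi (x * 1)) :=
    (GammaIntegral_convergent hs).mono_set (Ioi_subset_Ioi (by positivity))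
  have hsub := (integrableOn_comp_exp_Ioi (fun y ↦ exp (-(x * y)) * (x * y) ^ (s - 1)) 0).2
    (by simpa using (integrableOn_Ioi_comp_mul_left_iff _ 1 hx).2 hΓ)
  simp only [exp_smul_gammaIntegrand_mul_exp s x _ hx] at hsub
  refine (hsub.const_mul (x ^ (s - 1))⁻¹).congr (.of_forall fun u ↦ ?_)
  exact inv_mul_cancel_left₀ (rpow_pos_of_pos hx _).ne' _

theorem AntitoneOn.mul_tsum_le_integral_Ioi {f : ℝ → ℝ} {h : ℝ} (hh : 0 < h)
    (anti : AntitoneOn f (Ici 0)) (integrable : IntegrableOn f (Ioi 0))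
    (nonneg : ∀ x ∈ Ioi 0, 0 ≤ f x) :
    h * ∑' n : ℕ, f ((n + 1) * h) ≤ ∫ x in Ioi 0, f x := by
  have key := AntitoneOn.tsum_add_one_le_integral (f := fun x ↦ f (x * h))
    (fun x hx y hy hxy ↦ anti (mul_nonneg hx hh.le) (mul_nonneg hy hh.le) (by gcongr))
    (by simpa using (integrableOn_Ioi_comp_mul_right_iff f 0 hh).2 (by rwa [zero_mul]))
    (fun x hx ↦ nonneg _ (mul_pos hx hh))
  rw [integral_comp_mul_right_Ioi f 0 hh, zero_mul, smul_eq_mul] at key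
  push_cast at key
  exact (le_inv_mul_iff₀ hh).1 key

def natEquivIntGE (N : ℤ) : ℕ ≃ {i : ℤ // N ≤ i} where
  toFun n := ⟨N + n, le_add_of_nonneg_right (Int.natCast_nonneg n)⟩
  invFun i := (i.1 - N).toNat
  left_inv n := by simp
  right_inv i := Subtype.ext (by simp [Int.toNat_of_nonneg (sub_nonneg.mpr i.2)])

lemma tsum_int_ge_eq_tsum_nat {M : Type*} [AddCommMonoid M] [TopologicalSpace M] (N : ℤ)
    (f : ℤ → M) : ∑' i : {i : ℤ // N ≤ i}, f i = ∑' n : ℕ, f (N + n) :=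
  ((natEquivIntGE N).tsum_eq (f ∘ Subtype.val)).symm

/-- **Upper truncation error of the trapezoidal series.** If `t e^{(N-1)h} ≥ 1 - α`, the
upper tail (indices `i ≥ N`) of the trapezoidal approximation of the fractional kernel is
bounded by `(t^(α-1)/Γ(α)) · Γ(1-α, t e^{(N-1)h})/Γ(1-α)`. -/
theorem upper_truncation_error
    (α h t : ℝ) (N : ℤ) (hα0 : 0 < α) (hα1 : α < 1) (hh : 0 < h) (ht : 0 < t)
    (hN : 1 - α ≤ t * Real.exp (((N : ℝ) - 1) * h)) :
    h * (Real.sin (Real.pi * α) / Real.pi) *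
        ∑' i : {i : ℤ // N ≤ i},
          Real.exp ((1 - α) * (((i : ℤ) : ℝ) * h)) * Real.exp (-Real.exp (((i : ℤ) : ℝ) * h) * t)
      ≤ (t ^ (α - 1) / Real.Gamma α) *
          (upperGamma (1 - α) (t * Real.exp (((N : ℝ) - 1) * h)) / Real.Gamma (1 - α)) := by
  set a := ((N : ℝ) - 1) * h
  set x := t * exp a
  have hx : 0 < x := by positivity
  have hterm (n : ℕ) : kernelIntegrand (1 - α) t (((N + n : ℤ) : ℝ) * h) =
      exp ((1 - α) * a) * kernelIntegrand (1 - α) x ((n + 1) * h) := by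
    rw [← kernelIntegrand_add]
    congr 1
    push_cast [a]
    ring
  have hsin : 0 < sin (π * α) := sin_pos_of_pos_of_lt_pi (by positivity) (by nlinarith [pi_pos])
  have hpow : t ^ (α - 1) * x ^ (1 - α) = exp ((1 - α) * a) := by
    rw [mul_rpow ht.le (exp_pos a).le, ← exp_mul, ← mul_assoc, ← rpow_add ht]
    simp [mul_comm]
  calc _ = sin (π * α) / π * exp ((1 - α) * a) *
        (h * ∑' n : ℕ, kernelIntegrand (1 - α) x ((n + 1) * h)) := by
        change h * (sin (π * α) / π) *
          ∑' i : {i : ℤ // N ≤ i}, kernelIntegrand (1 - α) t ((i : ℤ) * h) = _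
        rw [tsum_int_ge_eq_tsum_nat N (fun i : ℤ ↦ kernelIntegrand (1 - α) t (i * h))]
        simp only [hterm, tsum_mul_left]
        ring
    _ ≤ sin (π * α) / π * exp ((1 - α) * a) * ∫ u in Ioi 0, kernelIntegrand (1 - α) x u := by
        gcongr
        exact (antitoneOn_kernelIntegrand hN hx.le).mul_tsum_le_integral_Ioi hh
          (integrableOn_kernelIntegrand (by linarith) hx) fun u _ ↦ kernelIntegrand_nonneg _ _ _
    _ = _ := by
        rw [upperGamma_eq_rpow_mul_integral_kernelIntegrand _ hx, ← hpow]
        rw [div_mul_div_comm, Gamma_mul_Gamma_one_sub]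
        field_simp
end

section
/- Let α > 0 be a non-integer real number, m = ⌈α⌉, and let f : [0,T] → ℝ be m times continuously differentiable. Define the Caputo fractional derivative D_*^α f(s) = (1/Γ(m−α)) ∫_0^s (s−σ)^{m−α−1} f^{(m)}(σ) dσ. Then for every t ∈ [0,T], (1/Γ(α)) ∫_0^t (t−s)^{α−1} D_*^α f(s) ds = f(t) − Σ_{k=0}^{m−1} (t^k/k!) f^{(k)}(0). -/
open MeasureTheory Real Set intervalIntegral

open ProbabilityTheory (beta)

/-! Write `J^a g (t) = Γ(a)⁻¹ ∫₀ᵗ (t - s)^(a-1) g(s) ds`, so that the left-hand side is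
`J^α (J^(m-α) g) (t)` with `g = f^(m)`. Exchanging the order of integration over the triangle
`0 < σ < s < t` leaves the inner integral `∫_σ^t (t - s)^(a-1) (s - σ)^(b-1) ds`, a Beta integral
equal to `B(b, a) (t - σ)^(a+b-1)`; this gives the semigroup law `J^a J^b = J^(a+b)` on continuous
functions. Hence the left-hand side is `J^m g (t) = ∫₀ᵗ (t - σ)^(m-1) / (m-1)! f^(m)(σ) dσ`, which
is the integral remainder in Taylor's theorem of order `m - 1`. -/

theorem integral_rpow_mul_sub_rpow {u v a : ℝ} (hu : 0 < u) (hv : 0 < v) (ha : 0 < a) :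
    ∫ x in 0..a, x ^ (u - 1) * (a - x) ^ (v - 1) = beta u v * a ^ (u + v - 1) := by
  have h := Complex.betaIntegral_scaled u v ha
  rw [Complex.betaIntegral_eq_Gamma_mul_div _ _ (by simpa) (by simpa)] at h
  apply Complex.ofReal_injective
  rw [← intervalIntegral.integral_ofReal]
  convert h using 1
  · refine intervalIntegral.integral_congr fun x hx => ?_
    rw [uIcc_of_le ha.le] at hx
    push_cast [Complex.ofReal_cpow hx.1, Complex.ofReal_cpow (sub_nonneg.2 hx.2)]
    rfl
  · push_cast [beta, Complex.ofReal_cpow ha.le, ← Complex.Gamma_ofReal]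
    ring

theorem integral_sub_rpow_mul_sub_rpow {a b σ t : ℝ} (ha : 0 < a) (hb : 0 < b) (hσt : σ < t) :
    ∫ s in σ..t, (t - s) ^ (a - 1) * (s - σ) ^ (b - 1) = beta b a * (t - σ) ^ (a + b - 1) := by
  have h := intervalIntegral.integral_comp_sub_right (a := σ) (b := t)
    (fun x => x ^ (b - 1) * (t - σ - x) ^ (a - 1)) σ
  simp only [sub_self, sub_sub_sub_cancel_right] at h
  rw [integral_rpow_mul_sub_rpow hb ha (sub_pos.2 hσt), add_comm b] at h
  simp only [← h, mul_comm]

theorem integral_sub_rpow {b s : ℝ} (hb : 0 < b) :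
    ∫ σ in 0..s, (s - σ) ^ (b - 1) = s ^ b / b := by
  rw [intervalIntegral.integral_comp_sub_left (fun x => x ^ (b - 1)), sub_self, sub_zero,
    integral_rpow (Or.inl (by linarith)), sub_add_cancel, zero_rpow hb.ne', sub_zero]

theorem intervalIntegrable_sub_rpow {b s : ℝ} (hb : 0 < b) :
    IntervalIntegrable (fun σ => (s - σ) ^ (b - 1)) volume 0 s := by
  simpa using ((intervalIntegral.intervalIntegrable_rpow' (a := 0) (b := s)
    (by linarith : -1 < b - 1)).comp_sub_left s).symm

theorem restrict_Ioc_restrict_Iio {μ : Measure ℝ} {c s t : ℝ} (hst : s ≤ t) :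
    (μ.restrict (Ioc c t)).restrict (Iio s) = μ.restrict (Ioo c s) := by
  rw [Measure.restrict_restrict measurableSet_Iio]
  congr 1
  ext σ
  simp only [mem_inter_iff, mem_Iio, mem_Ioc, mem_Ioo]
  constructor
  · rintro ⟨hσs, hcσ, -⟩
    exact ⟨hcσ, hσs⟩
  · rintro ⟨hcσ, hσs⟩
    exact ⟨hσs, hcσ, hσs.le.trans hst⟩

theorem restrict_Ioc_restrict_Ioi {μ : Measure ℝ} {c σ t : ℝ} (hcσ : c ≤ σ) :
    (μ.restrict (Ioc c t)).restrict (Ioi σ) = μ.restrict (Ioc σ t) := by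
  rw [Measure.restrict_restrict measurableSet_Ioi, inter_comm, Ioc_inter_Ioi, max_eq_right hcσ]

noncomputable def fracIntegral (a : ℝ) (g : ℝ → ℝ) (t : ℝ) : ℝ :=
  (Gamma a)⁻¹ * ∫ s in 0..t, (t - s) ^ (a - 1) * g s

noncomputable def iteratedFracIntegrand (a b t : ℝ) (g : ℝ → ℝ) (s : ℝ) : ℝ → ℝ :=
  (Iio s).indicator fun σ => (t - s) ^ (a - 1) * ((s - σ) ^ (b - 1) * g σ)

section IteratedFracIntegrand

variable {a b t : ℝ} {g : ℝ → ℝ}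

theorem integrable_iteratedFracIntegrand {s : ℝ} (hb : 0 < b) (hs : s ∈ Icc 0 t)
    (hg : ContinuousOn g (Icc 0 s)) :
    Integrable (iteratedFracIntegrand a b t g s) (volume.restrict (Ioc 0 t)) := by
  rw [iteratedFracIntegrand, integrable_indicator_iff measurableSet_Iio, IntegrableOn,
    restrict_Ioc_restrict_Iio hs.2, ← IntegrableOn,
    ← intervalIntegrable_iff_integrableOn_Ioo_of_le hs.1]
  exact ((intervalIntegrable_sub_rpow hb).mul_continuousOn (uIcc_of_le hs.1 ▸ hg)).const_mul _

theorem integral_iteratedFracIntegrand {s : ℝ} (hs : s ∈ Icc 0 t) :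
    ∫ σ, iteratedFracIntegrand a b t g s σ ∂volume.restrict (Ioc 0 t)
      = (t - s) ^ (a - 1) * ∫ σ in 0..s, (s - σ) ^ (b - 1) * g σ := by
  rw [iteratedFracIntegrand, MeasureTheory.integral_indicator measurableSet_Iio,
    restrict_Ioc_restrict_Iio hs.2, ← integral_Ioc_eq_integral_Ioo, ← integral_of_le hs.1,
    intervalIntegral.integral_const_mul]

theorem integral_iteratedFracIntegrand_flip (ha : 0 < a) (hb : 0 < b) {σ : ℝ}
    (hσ : σ ∈ Ico 0 t) :
    ∫ s, iteratedFracIntegrand a b t g s σ ∂volume.restrict (Ioc 0 t)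
      = beta b a * ((t - σ) ^ (a + b - 1) * g σ) := by
  have hsection : (fun s => iteratedFracIntegrand a b t g s σ)
      = (Ioi σ).indicator fun s => (t - s) ^ (a - 1) * (s - σ) ^ (b - 1) * g σ := by
    ext s
    simp [iteratedFracIntegrand, indicator_apply, mul_assoc]
  rw [hsection, MeasureTheory.integral_indicator measurableSet_Ioi,
    restrict_Ioc_restrict_Ioi hσ.1, ← integral_of_le hσ.2.le, intervalIntegral.integral_mul_const,
    integral_sub_rpow_mul_sub_rpow ha hb hσ.2]
  ring

theorem norm_iteratedFracIntegrand_le {s σ C : ℝ} (hst : s ≤ t) (hC : ‖g σ‖ ≤ C) :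
    ‖iteratedFracIntegrand a b t g s σ‖ ≤ iteratedFracIntegrand a b t (fun _ => C) s σ := by
  by_cases hσs : σ < s
  · have hts : 0 ≤ (t - s) ^ (a - 1) := rpow_nonneg (sub_nonneg.2 hst) _
    have hsσ : 0 ≤ (s - σ) ^ (b - 1) := rpow_nonneg (sub_nonneg.2 hσs.le) _
    simp only [iteratedFracIntegrand, indicator_of_mem (mem_Iio.2 hσs), norm_mul,
      norm_of_nonneg hts, norm_of_nonneg hsσ]
    gcongr
  · simp [iteratedFracIntegrand, hσs]

theorem aestronglyMeasurable_uncurry_iteratedFracIntegrand (hg : ContinuousOn g (Icc 0 t)) :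
    AEStronglyMeasurable (Function.uncurry (iteratedFracIntegrand a b t g))
      ((volume.restrict (Ioc 0 t)).prod (volume.restrict (Ioc 0 t))) := by
  have huncurry : Function.uncurry (iteratedFracIntegrand a b t g)
      = {p : ℝ × ℝ | p.2 < p.1}.indicator
          fun p => (t - p.1) ^ (a - 1) * ((p.1 - p.2) ^ (b - 1) * g p.2) := by
    ext ⟨s, σ⟩
    simp [iteratedFracIntegrand, indicator_apply]
  have hg' : AEStronglyMeasurable g (volume.restrict (Ioc 0 t)) :=
    (hg.aestronglyMeasurable measurableSet_Icc).mono_measure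
      (Measure.restrict_mono Ioc_subset_Icc_self le_rfl)
  rw [huncurry]
  refine AEStronglyMeasurable.indicator ?_ (measurableSet_lt measurable_snd measurable_fst)
  exact (by fun_prop : Measurable fun p : ℝ × ℝ => (t - p.1) ^ (a - 1)).aestronglyMeasurable.mul
    ((by fun_prop : Measurable fun p : ℝ × ℝ => (p.1 - p.2) ^ (b - 1)).aestronglyMeasurable.mul
      hg'.comp_snd)

theorem integrable_uncurry_iteratedFracIntegrand (ha : 0 < a) (hb : 0 < b)
    (hg : ContinuousOn g (Icc 0 t)) :
    Integrable (Function.uncurry (iteratedFracIntegrand a b t g))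
      ((volume.restrict (Ioc 0 t)).prod (volume.restrict (Ioc 0 t))) := by
  set μ := volume.restrict (Ioc 0 t)
  obtain ⟨C, hC⟩ := isCompact_Icc.exists_bound_of_continuousOn hg
  have hmeas := aestronglyMeasurable_uncurry_iteratedFracIntegrand (a := a) (b := b) hg
  -- Integrating in `σ` first, only `(s - σ)^(b-1)` is singular, and it integrates to `s^b / b`.
  refine (integrable_prod_iff hmeas).2 ⟨?_, ?_⟩
  · filter_upwards [ae_restrict_mem measurableSet_Ioc] with s hs
    exact integrable_iteratedFracIntegrand hb (Ioc_subset_Icc_self hs)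
      (hg.mono (Icc_subset_Icc_right hs.2))
  refine Integrable.mono' (g := fun s => (t - s) ^ (a - 1) * (s ^ b / b * C)) ?_
    hmeas.norm.integral_prod_right' ?_
  · exact ((intervalIntegrable_sub_rpow ha).mul_continuousOn
      ((continuous_rpow_const hb.le).div_const _ |>.mul_const _).continuousOn).1
  filter_upwards [ae_restrict_mem measurableSet_Ioc] with s hs
  have hbound : ∀ᵐ σ ∂μ, ‖iteratedFracIntegrand a b t g s σ‖
      ≤ iteratedFracIntegrand a b t (fun _ => C) s σ := by
    filter_upwards [ae_restrict_mem measurableSet_Ioc] with σ hσ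
    exact norm_iteratedFracIntegrand_le hs.2 (hC σ (Ioc_subset_Icc_self hσ))
  rw [norm_of_nonneg (integral_nonneg fun _ => norm_nonneg _)]
  calc ∫ σ, ‖iteratedFracIntegrand a b t g s σ‖ ∂μ
      ≤ ∫ σ, iteratedFracIntegrand a b t (fun _ => C) s σ ∂μ :=
        integral_mono_of_nonneg (ae_of_all _ fun _ => norm_nonneg _)
          (integrable_iteratedFracIntegrand hb (Ioc_subset_Icc_self hs) continuousOn_const) hbound
    _ = (t - s) ^ (a - 1) * (s ^ b / b * C) := by
      rw [integral_iteratedFracIntegrand (Ioc_subset_Icc_self hs),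
        intervalIntegral.integral_mul_const, integral_sub_rpow hb]

end IteratedFracIntegrand

theorem integral_sub_rpow_mul_integral_sub_rpow_mul {a b t : ℝ} (ha : 0 < a) (hb : 0 < b)
    (ht : 0 ≤ t) {g : ℝ → ℝ} (hg : ContinuousOn g (Icc 0 t)) :
    ∫ s in 0..t, (t - s) ^ (a - 1) * ∫ σ in 0..s, (s - σ) ^ (b - 1) * g σ
      = beta b a * ∫ σ in 0..t, (t - σ) ^ (a + b - 1) * g σ := by
  set μ := volume.restrict (Ioc 0 t)
  calc ∫ s in 0..t, (t - s) ^ (a - 1) * ∫ σ in 0..s, (s - σ) ^ (b - 1) * g σ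
      = ∫ s, ∫ σ, iteratedFracIntegrand a b t g s σ ∂μ ∂μ := by
        rw [integral_of_le ht]
        exact setIntegral_congr_fun measurableSet_Ioc fun s hs =>
          (integral_iteratedFracIntegrand (Ioc_subset_Icc_self hs)).symm
    _ = ∫ σ, ∫ s, iteratedFracIntegrand a b t g s σ ∂μ ∂μ :=
        integral_integral_swap (integrable_uncurry_iteratedFracIntegrand ha hb hg)
    _ = beta b a * ∫ σ in 0..t, (t - σ) ^ (a + b - 1) * g σ := by
        rw [integral_of_le ht, ← MeasureTheory.integral_const_mul, integral_Ioc_eq_integral_Ioo,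
          integral_Ioc_eq_integral_Ioo]
        exact setIntegral_congr_fun measurableSet_Ioo fun σ hσ =>
          integral_iteratedFracIntegrand_flip ha hb (Ioo_subset_Ico_self hσ)

theorem fracIntegral_fracIntegral {a b t : ℝ} (ha : 0 < a) (hb : 0 < b) (ht : 0 ≤ t)
    {g : ℝ → ℝ} (hg : ContinuousOn g (Icc 0 t)) :
    fracIntegral a (fracIntegral b g) t = fracIntegral (a + b) g t := by
  simp only [fracIntegral, mul_left_comm _ (Gamma b)⁻¹, intervalIntegral.integral_const_mul,
    integral_sub_rpow_mul_integral_sub_rpow_mul ha hb ht hg, beta, add_comm b a]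
  have := (Gamma_pos_of_pos ha).ne'
  have := (Gamma_pos_of_pos hb).ne'
  field_simp

theorem fracIntegral_natCast_add_one (n : ℕ) (g : ℝ → ℝ) (t : ℝ) :
    fracIntegral (n + 1) g t = ∫ σ in 0..t, (t - σ) ^ n / n.factorial * g σ := by
  simp only [fracIntegral, Gamma_nat_eq_factorial, add_sub_cancel_right, rpow_natCast,
    ← intervalIntegral.integral_const_mul]
  congr 1 with σ
  ring

theorem iteratedDerivWithin_Icc_eq {f : ℝ → ℝ} {a b c x : ℝ} (n : ℕ) (hx : x ∈ Ico a b)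
    (hbc : b ≤ c) : iteratedDerivWithin n f (Icc a b) x = iteratedDerivWithin n f (Icc a c) x := by
  have h : Icc a b =ᶠ[nhds x] Icc a c := by
    filter_upwards [Iio_mem_nhds hx.2] with y (hy : y < b)
    exact propext (and_congr_right fun _ => ⟨fun _ => hy.le.trans hbc, fun _ => hy.le⟩)
  simp only [iteratedDerivWithin, iteratedFDerivWithin_congr_set h]

theorem taylor_integral_remainder_Icc {f : ℝ → ℝ} {a b x : ℝ} {n : ℕ}
    (hf : ContDiffOn ℝ (n + 1 : ℕ) f (Icc a b)) (hx : x ∈ Icc a b) :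
    f x - taylorWithinEval f n (Icc a b) a x =
      ∫ y in a..x, (x - y) ^ n / n.factorial * iteratedDerivWithin (n + 1) f (Icc a b) y := by
  rcases hx.1.eq_or_lt with rfl | hax
  · simp [taylorWithinEval_self]
  have h := taylor_integral_remainder (hf.mono (uIcc_of_le hx.1 ▸ Icc_subset_Icc_right hx.2))
  rw [uIcc_of_le hx.1] at h
  have htaylor : taylorWithinEval f n (Icc a x) a x = taylorWithinEval f n (Icc a b) a x := by
    simp only [taylor_within_apply, iteratedDerivWithin_Icc_eq _ ⟨le_rfl, hax⟩ hx.2]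
  rw [← htaylor, h]
  refine intervalIntegral.integral_congr_uIoo fun y hy => ?_
  rw [uIoo_of_le hx.1] at hy
  rw [smul_eq_mul, iteratedDerivWithin_Icc_eq _ ⟨hy.1.le, hy.2⟩ hx.2]

/-- **Fractional integral of the Caputo derivative.** For non-integer `α > 0`,
`m = ⌈α⌉`, and an `m` times continuously differentiable `f` on `[0,T]`, applying the
Riemann–Liouville fractional integral `J^α` to the Caputo derivative `D_*^α f` recovers
`f` minus its Taylor polynomial of degree `m-1` at `0`. -/
theorem fracint_caputo_deriv
    (α T : ℝ) (m : ℕ) (hα : 0 < α) (hni : ∀ n : ℤ, α ≠ (n : ℝ)) (hm : m = ⌈α⌉₊)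
    (hT : 0 < T) (f : ℝ → ℝ) (hf : ContDiffOn ℝ m f (Set.Icc 0 T)) :
    ∀ t ∈ Set.Icc (0:ℝ) T,
      (1 / Real.Gamma α) *
        ∫ s in (0:ℝ)..t, (t - s) ^ (α - 1) *
          ((1 / Real.Gamma ((m : ℝ) - α)) *
            ∫ σ in (0:ℝ)..s,
              (s - σ) ^ ((m : ℝ) - α - 1) * iteratedDerivWithin m f (Set.Icc 0 T) σ)
      = f t - ∑ k ∈ Finset.range m,
          t ^ k / (Nat.factorial k : ℝ) * iteratedDerivWithin k f (Set.Icc 0 T) 0 := by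
  intro t ht
  have hαm : α < m := hm ▸ (Nat.le_ceil α).lt_of_ne fun h => hni ⌈α⌉₊ (by exact_mod_cast h)
  obtain ⟨n, rfl⟩ : ∃ n, m = n + 1 := Nat.exists_eq_add_one.2 (hm ▸ Nat.ceil_pos.2 hα)
  set g := iteratedDerivWithin (n + 1) f (Icc 0 T)
  have hg : ContinuousOn g (Icc 0 t) :=
    (hf.continuousOn_iteratedDerivWithin le_rfl (uniqueDiffOn_Icc hT)).mono
      (Icc_subset_Icc_right ht.2)
  have htaylor : ∑ k ∈ Finset.range (n + 1),
      t ^ k / k.factorial * iteratedDerivWithin k f (Icc 0 T) 0 = taylorWithinEval f n (Icc 0 T) 0 t := by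
    simp [taylor_within_apply, div_eq_inv_mul]
  calc _ = fracIntegral α (fracIntegral ((n + 1 : ℕ) - α) g) t := by
        simp only [fracIntegral, one_div]
    _ = fracIntegral (n + 1) g t := by
        rw [fracIntegral_fracIntegral hα (sub_pos.2 hαm) ht.1 hg, add_sub_cancel, Nat.cast_succ]
    _ = _ := by
        rw [fracIntegral_natCast_add_one, ← taylor_integral_remainder_Icc hf ht, htaylor]
end
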